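/- arXiv:2204.06111 — 5 statements merged into one kernel-verified Lean document; each statement's English description precedes it below -/
import Mathlib

section
/- Conversely, if a graph Γ on vertex set Fin n admits points x_1 < x_2 < ⋯ < x_n in ℝ such that {i,j} is an edge iff i ≠ j and |x_i − x_j| ≤ 1, then there exists a Hessenberg function h : Fin n → Fin n (i.e., h(i) ≥ i and h monotone) with Γ = Γ(h), where Γ(h) has edges {i,j} for i < j ≤ h(i). -/
/-- A graph with a strictly increasing unit interval
representation is a Hessenberg graph. -/
theorem unit_interval_strictMono_is_hessenberg {n : ℕ} (Γ : SimpleGraph (Fin n))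
    (x : Fin n → ℝ) (hx : StrictMono x)
    (hadj : ∀ i j : Fin n, Γ.Adj i j ↔ (i ≠ j ∧ |x i - x j| ≤ 1)) :
    ∃ h : Fin n → Fin n, (∀ i, i ≤ h i) ∧ Monotone h ∧
      ∀ i j : Fin n, Γ.Adj i j ↔ ((i < j ∧ j ≤ h i) ∨ (j < i ∧ i ≤ h j)) := by
  set S : Fin n → Finset (Fin n) := fun i => Finset.univ.filter (fun j => x j ≤ x i + 1) with hS
  have hmem : ∀ i : Fin n, i ∈ S i := by
    intro i
    simp [hS]
  have hne : ∀ i : Fin n, (S i).Nonempty := fun i => ⟨i, hmem i⟩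
  set h : Fin n → Fin n := fun i => (S i).max' (hne i) with hh
  have hkey : ∀ i j : Fin n, j ≤ h i ↔ x j ≤ x i + 1 := by
    intro i j
    constructor
    · intro hle
      have : h i ∈ S i := (S i).max'_mem (hne i)
      have h2 : x (h i) ≤ x i + 1 := by simpa [hS] using this
      exact le_trans (hx.monotone hle) h2
    · intro hle
      exact (S i).le_max' j (by simp [hS, hle])
  refine ⟨h, fun i => (hkey i i).2 (by linarith [le_refl (x i)]), ?_, ?_⟩
  · intro i i' hii'
    exact (hkey i' (h i)).2 (le_trans ((hkey i (h i)).1 le_rfl)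
      (by linarith [hx.monotone hii']))
  · intro i j
    rw [hadj]
    constructor
    · rintro ⟨hne', habs⟩
      rcases lt_or_gt_of_ne hne' with hlt | hgt
      · left
        refine ⟨hlt, (hkey i j).2 ?_⟩
        have := hx hlt
        rw [abs_sub_comm, abs_of_nonneg (by linarith)] at habs
        linarith
      · right
        refine ⟨hgt, (hkey j i).2 ?_⟩
        have := hx hgt
        rw [abs_of_nonneg (by linarith)] at habs
        linarith
    · rintro (⟨hlt, hle⟩ | ⟨hlt, hle⟩)
      · have := (hkey i j).1 hle
        have := hx hlt
        exact ⟨ne_of_lt hlt, by rw [abs_sub_comm, abs_of_nonneg (by linarith)]; linarith⟩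
      · have := (hkey j i).1 hle
        have := hx hlt
        exact ⟨(ne_of_lt hlt).symm, by rw [abs_of_nonneg (by linarith)]; linarith⟩
end

section
/- The 3-sun graph (a triangle {a,b,c} together with three outer vertices a', b', c', where a' is adjacent to b and c, b' is adjacent to a and c, c' is adjacent to a and b, and the outer vertices are pairwise non-adjacent) is not a unit interval graph. -/
/-- Adjacency of the 3-sun graph: triangle 0,1,2 with outer vertices 3,4,5,
where 3 ~ 1,2; 4 ~ 0,2; 5 ~ 0,1; outer vertices pairwise non-adjacent. -/
def sunAdj (u v : Fin 6) : Prop :=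
  (u.val, v.val) ∈ [(0,1),(1,2),(0,2),(1,3),(2,3),(0,4),(2,4),(0,5),(1,5)] ∨
  (v.val, u.val) ∈ [(0,1),(1,2),(0,2),(1,3),(2,3),(0,4),(2,4),(0,5),(1,5)]

/-- The 3-sun graph is not a unit interval graph. -/
theorem sun_not_unit_interval :
    ¬ ∃ x : Fin 6 → ℝ, ∀ u v : Fin 6, u ≠ v → (sunAdj u v ↔ |x u - x v| ≤ 1) := by
  rintro ⟨x, h⟩
  have h13 := (h 1 3 (by decide)).mp (by unfold sunAdj; decide)
  have h23 := (h 2 3 (by decide)).mp (by unfold sunAdj; decide)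
  have h04 := (h 0 4 (by decide)).mp (by unfold sunAdj; decide)
  have h24 := (h 2 4 (by decide)).mp (by unfold sunAdj; decide)
  have h05 := (h 0 5 (by decide)).mp (by unfold sunAdj; decide)
  have h15 := (h 1 5 (by decide)).mp (by unfold sunAdj; decide)
  have n03 : ¬ sunAdj 0 3 := by unfold sunAdj; decide
  have n14 : ¬ sunAdj 1 4 := by unfold sunAdj; decide
  have n25 : ¬ sunAdj 2 5 := by unfold sunAdj; decide
  have g03 : 1 < |x 0 - x 3| := not_le.1 fun hle => n03 ((h 0 3 (by decide)).mpr hle)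
  have g14 : 1 < |x 1 - x 4| := not_le.1 fun hle => n14 ((h 1 4 (by decide)).mpr hle)
  have g25 : 1 < |x 2 - x 5| := not_le.1 fun hle => n25 ((h 2 5 (by decide)).mpr hle)
  rw [abs_sub_le_iff] at h13 h23 h04 h24 h05 h15
  rw [lt_abs] at g03 g14 g25
  obtain ⟨a13, b13⟩ := h13
  obtain ⟨a23, b23⟩ := h23
  obtain ⟨a04, b04⟩ := h04
  obtain ⟨a24, b24⟩ := h24
  obtain ⟨a05, b05⟩ := h05
  obtain ⟨a15, b15⟩ := h15
  rcases g03 with g3 | g3 <;> rcases g14 with g4 | g4 <;> rcases g25 with g5 | g5 <;>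
    linarith
end

section
/- Let Γ be a connected graph on vertex set V. A clustering of Γ is an (unordered) partition of V into blocks each of which induces a connected subgraph of Γ. The set L_Γ of clusterings, ordered by refinement, forms a lattice with least element the partition into singletons and greatest element the one-block partition {V}. -/
/-- A setoid on the vertices of `G` is a clustering if every equivalence class
induces a connected subgraph of `G`. -/
def IsClustering {V : Type*} (G : SimpleGraph V) (s : Setoid V) : Prop :=
  ∀ v : V, (G.induce {u | s.r u v}).Connected

section Aux

variable {V : Type*} (G : SimpleGraph V)

/-- The restriction of `G` to edges within classes of `r`. -/
def Hgraph (r : Setoid V) : SimpleGraph V where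
  Adj a b := G.Adj a b ∧ r.r a b
  symm := ⟨fun a b h => ⟨h.1.symm, r.symm' h.2⟩⟩
  loopless := ⟨fun a h => G.loopless.irrefl a h.1⟩

variable {G}

/-- Lemma A: the reachability classes of any subgraph of `G` (in particular `Hgraph G r`)
form a clustering of `G`. -/
lemma clustering_reachableSetoid {H : SimpleGraph V} (hle : H ≤ G) :
    IsClustering G H.reachableSetoid := by
  intro v
  rw [SimpleGraph.connected_iff]
  refine ⟨?_, ?_⟩
  · rintro ⟨a, ha⟩ ⟨b, hb⟩
    have key : ∀ (a b : V) (w : H.Walk a b) (ha : H.Reachable a v) (hb : H.Reachable b v),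
        (G.induce {u | H.reachableSetoid.r u v}).Reachable ⟨a, ha⟩ ⟨b, hb⟩ := by
      intro a b w
      induction w with
      | nil => intro h1 h2; exact SimpleGraph.Reachable.refl _
      | @cons c d e h p ih =>
        intro h1 h2
        have hd : H.Reachable d v := p.reachable.trans h2
        refine (SimpleGraph.Adj.reachable (?_ : (G.induce {u | H.reachableSetoid.r u v}).Adj ⟨c, h1⟩ ⟨d, hd⟩)).trans (ih hd h2)
        exact hle h
    obtain ⟨w⟩ := (ha : H.Reachable a v).trans ((hb : H.Reachable b v)).symm
    exact key a b w ha hb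
  · exact ⟨⟨v, H.reachableSetoid.refl v⟩⟩

/-- Lemma B: if `r` is a clustering and `r ≤ r'`, then `r`-related vertices are
reachable in `Hgraph G r'`. -/
lemma rel_reachable_hgraph {r r' : Setoid V} (hc : IsClustering G r) (hrr' : r ≤ r')
    {a b : V} (hab : r.r a b) : (Hgraph G r').Reachable a b := by
  have hconn := hc b
  have hreach := hconn.preconnected ⟨a, hab⟩ ⟨b, r.refl b⟩
  obtain ⟨w⟩ := hreach
  have key : ∀ (x y : {u | r.r u b}) (w : (G.induce {u | r.r u b}).Walk x y),
      (Hgraph G r').Reachable x.1 y.1 := by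
    intro x y w
    induction w with
    | nil => exact SimpleGraph.Reachable.refl _
    | @cons c d e h p ih =>
      refine (SimpleGraph.Adj.reachable ?_).trans ih
      refine ⟨h, hrr' (r.trans' c.2 (r.symm' d.2))⟩
  exact key _ _ w

/-- Lemma C: if every edge of `H` joins `w`-related vertices, then `H`-reachable
vertices are `w`-related. -/
lemma reachable_rel {H : SimpleGraph V} {w : Setoid V}
    (h : ∀ a b, H.Adj a b → w.r a b) {a b : V} (hab : H.Reachable a b) : w.r a b := by
  obtain ⟨p⟩ := hab
  induction p with
  | nil => exact w.refl _
  | cons h' p ih => exact w.trans' (h _ _ h') ih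

lemma hgraph_le (r : Setoid V) : Hgraph G r ≤ G := fun _ _ h => h.1

end Aux

/-- the clusterings of a connected graph, ordered by refinement,
form a lattice with least element the partition into singletons (`⊥`) and
greatest element the one-block partition (`⊤`). -/
theorem clusterings_form_lattice {V : Type*} [Fintype V] (G : SimpleGraph V)
    (hG : G.Connected) :
    IsClustering G ⊥ ∧ IsClustering G ⊤ ∧
    (∀ s : Setoid V, IsClustering G s → ⊥ ≤ s ∧ s ≤ ⊤) ∧
    (∀ s t : Setoid V, IsClustering G s → IsClustering G t →
      ∃ u : Setoid V, IsClustering G u ∧ s ≤ u ∧ t ≤ u ∧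
        ∀ w : Setoid V, IsClustering G w → s ≤ w → t ≤ w → u ≤ w) ∧
    (∀ s t : Setoid V, IsClustering G s → IsClustering G t →
      ∃ u : Setoid V, IsClustering G u ∧ u ≤ s ∧ u ≤ t ∧
        ∀ w : Setoid V, IsClustering G w → w ≤ s → w ≤ t → w ≤ u) := by
  refine ⟨?_, ?_, ?_, ?_, ?_⟩
  · -- ⊥ is a clustering: classes are singletons
    intro v
    have : {u | (⊥ : Setoid V).r u v} = {v} := by
      ext u
      simp [Setoid.bot_def, Set.mem_singleton_iff]
    rw [this]
    rw [SimpleGraph.connected_iff]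
    refine ⟨?_, ?_⟩
    · rintro ⟨a, ha⟩ ⟨b, hb⟩
      simp only [Set.mem_singleton_iff] at ha hb
      subst ha; subst hb
      exact SimpleGraph.Reachable.refl _
    · exact ⟨⟨v, rfl⟩⟩
  · -- ⊤ is a clustering: single class = univ
    intro v
    have : {u | (⊤ : Setoid V).r u v} = Set.univ := by
      ext u; simp [Setoid.top_def]
    rw [this]
    rw [SimpleGraph.connected_iff]
    refine ⟨?_, ?_⟩
    · rintro ⟨a, _⟩ ⟨b, _⟩
      obtain ⟨w⟩ := hG.preconnected a b
      have key : ∀ (x y : V) (w : G.Walk x y),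
          (G.induce (Set.univ : Set V)).Reachable ⟨x, trivial⟩ ⟨y, trivial⟩ := by
        intro x y w
        induction w with
        | nil => exact SimpleGraph.Reachable.refl _
        | @cons c d e h p ih =>
          exact (SimpleGraph.Adj.reachable
            (show (G.induce (Set.univ : Set V)).Adj ⟨c, trivial⟩ ⟨d, trivial⟩ from h)).trans ih
      exact key a b w
    · exact ⟨⟨v, trivial⟩⟩
  · intro s _; exact ⟨bot_le, le_top⟩
  · -- join
    intro s t hs ht
    refine ⟨(Hgraph G (s ⊔ t)).reachableSetoid, clustering_reachableSetoid (hgraph_le _),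
      ?_, ?_, ?_⟩
    · intro a b hab
      exact rel_reachable_hgraph hs le_sup_left hab
    · intro a b hab
      exact rel_reachable_hgraph ht le_sup_right hab
    · intro w hw hsw htw a b hab
      exact reachable_rel (H := Hgraph G (s ⊔ t)) (fun x y h => (sup_le hsw htw) h.2) hab
  · -- meet
    intro s t hs ht
    refine ⟨(Hgraph G (s ⊓ t)).reachableSetoid, clustering_reachableSetoid (hgraph_le _),
      ?_, ?_, ?_⟩
    · intro a b hab
      exact reachable_rel (H := Hgraph G (s ⊓ t)) (fun x y h => (inf_le_left (b := t)) h.2) hab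
    · intro a b hab
      exact reachable_rel (H := Hgraph G (s ⊓ t)) (fun x y h => (inf_le_right (a := s)) h.2) hab
    · intro w hw hws hwt a b hab
      exact rel_reachable_hgraph hw (le_inf hws hwt) hab
end

section
/- Define adi(Γ) as the minimum number of edges that must be added to a graph Γ to obtain a unit interval graph on the same vertex set. Then for the cycle graph C_n with n ≥ 3, adi(C_n) = n − 3. -/
/-!
Sort the vertices of a unit interval supergraph `G` of `C_n` by their representatives,
`x (σ 0) ≤ ⋯ ≤ x (σ (n - 1))`. Deleting `σ (i + 1)` leaves `C_n` connected, so some edge of `G`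
joins a vertex with `x ≤ x (σ i)` to one with `x ≥ x (σ (i + 2))`; hence
`x (σ (i + 2)) - x (σ i) ≤ 1`. So `G` contains the square of the path `σ 0, …, σ (n - 1)`, which
has `2n - 3` edges. Conversely, listing the cycle as `0, 1, n - 1, 2, n - 2, …` puts neighbours on
the cycle at most two places apart, so `C_n` lies inside a copy of that square, which is a unit
interval graph.
-/

/-- A graph is a unit interval graph if it admits a unit interval
representation. -/
def IsUnitInterval {V : Type*} (G : SimpleGraph V) : Prop :=
  ∃ x : V → ℝ, ∀ u v : V, G.Adj u v ↔ (u ≠ v ∧ |x u - x v| ≤ 1)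

/-- `adi(Γ)`: the minimal number of edges that must be added to `Γ` to obtain
a unit interval graph on the same vertex set. -/
noncomputable def adi {V : Type*} (G : SimpleGraph V) : ℕ :=
  sInf {k | ∃ G' : SimpleGraph V, G ≤ G' ∧ IsUnitInterval G' ∧
    Nat.card G'.edgeSet = Nat.card G.edgeSet + k}

/-- The cycle graph on `Fin n`. -/
def cycleGraph (n : ℕ) : SimpleGraph (Fin n) :=
  SimpleGraph.fromRel (fun i j => (i.val + 1) % n = j.val)

lemma Nat.mod_eq_ite_of_lt_two_mul {a n : ℕ} (h : a < 2 * n) :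
    a % n = if a < n then a else a - n := by
  split_ifs with ha
  · exact Nat.mod_eq_of_lt ha
  · rw [Nat.mod_eq_sub_mod (by omega), Nat.mod_eq_of_lt (by omega)]

lemma SimpleGraph.card_edgeSet_fromRel {V : Type*} {r : V → V → Prop}
    (hr : ∀ a b, r a b → ¬ r b a) :
    Nat.card (fromRel r).edgeSet = Nat.card {p : V × V // r p.1 p.2} := by
  have hne : ∀ p : V × V, r p.1 p.2 → p.1 ≠ p.2 := fun p hp h => hr _ _ hp (h ▸ hp)
  refine (Nat.card_congr (Equiv.ofBijective
    (fun p => (⟨s(p.1.1, p.1.2), (mem_edgeSet _).2 <| (fromRel_adj ..).2 ⟨hne _ p.2, .inl p.2⟩⟩ :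
      (fromRel r).edgeSet)) ⟨?_, ?_⟩)).symm
  · rintro ⟨⟨a, b⟩, hab⟩ ⟨⟨c, d⟩, hcd⟩ h
    simp only [Subtype.mk.injEq, Sym2.eq_iff] at h
    rcases h with ⟨rfl, rfl⟩ | ⟨rfl, rfl⟩
    · rfl
    · exact absurd hab (hr _ _ hcd)
  · rintro ⟨e, he⟩
    induction e using Sym2.ind with
    | _ u v =>
      obtain ⟨-, huv | hvu⟩ := (fromRel_adj ..).1 he
      · exact ⟨⟨(u, v), huv⟩, rfl⟩
      · exact ⟨⟨(v, u), hvu⟩, Subtype.ext Sym2.eq_swap⟩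

lemma SimpleGraph.card_edgeSet_le_of_le_comap {V W : Type*} [Finite V] {K : SimpleGraph V}
    {G : SimpleGraph W} (e : V ≃ W) (h : K ≤ G.comap e) :
    Nat.card K.edgeSet ≤ Nat.card G.edgeSet :=
  (Nat.card_mono (Set.toFinite _) (edgeSet_mono h)).trans_eq
    (Nat.card_congr (Iso.comap e G).mapEdgeSet)

lemma SimpleGraph.Preconnected.sub_le_one {V : Type*} {G : SimpleGraph V} (hG : G.Preconnected)
    {x : V → ℝ} (hx : ∀ u v, G.Adj u v → |x u - x v| ≤ 1) {u w : V}
    (hgap : ∀ v, x v ≤ x u ∨ x w ≤ x v) : x w - x u ≤ 1 := by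
  by_contra! hlt
  obtain ⟨p⟩ := hG u w
  obtain ⟨d, -, hfst, hsnd⟩ :=
    p.exists_boundary_dart {v | x v ≤ x u} (le_refl (x u)) (show ¬ x w ≤ x u by linarith)
  have hfst : x d.fst ≤ x u := hfst
  have hfar : x w ≤ x d.snd := (hgap _).resolve_left hsnd
  have := (abs_le.mp (hx _ _ d.adj)).1
  linarith

lemma IsUnitInterval.comap {V W : Type*} {G : SimpleGraph W} (hG : IsUnitInterval G)
    {f : V → W} (hf : Function.Injective f) : IsUnitInterval (G.comap f) := by
  obtain ⟨x, hx⟩ := hG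
  exact ⟨x ∘ f, fun u v => (hx _ _).trans (and_congr_left' hf.ne_iff)⟩

def pathSquare (n : ℕ) : SimpleGraph (Fin n) :=
  .fromRel fun i j => i.val + 1 = j.val ∨ i.val + 2 = j.val

lemma card_fin_pairs_val_add_eq (n k : ℕ) :
    Nat.card {p : Fin n × Fin n // p.1.val + k = p.2.val} = n - k := by
  rw [← Nat.card_fin (n - k)]
  exact Nat.card_congr
    { toFun := fun p => ⟨p.1.1, by omega⟩
      invFun := fun i => ⟨(⟨i, by omega⟩, ⟨i + k, by omega⟩), rfl⟩
      left_inv := fun ⟨⟨a, b⟩, h⟩ => by ext <;> simp [h]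
      right_inv := fun i => rfl }

lemma card_edgeSet_pathSquare (n : ℕ) :
    Nat.card (pathSquare n).edgeSet = (n - 1) + (n - 2) := by
  have hdisj : Disjoint (fun p : Fin n × Fin n => p.1.val + 1 = p.2.val)
      (fun p => p.1.val + 2 = p.2.val) := fun _ h₁ h₂ p hp => by
    have := h₁ p hp
    have := h₂ p hp
    omega
  rw [pathSquare, SimpleGraph.card_edgeSet_fromRel (by omega),
    Nat.card_congr (subtypeOrEquiv _ _ hdisj), Nat.card_sum, card_fin_pairs_val_add_eq,
    card_fin_pairs_val_add_eq]

lemma isUnitInterval_pathSquare (n : ℕ) : IsUnitInterval (pathSquare n) := by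
  refine ⟨fun i => (i.val : ℝ) / 2, fun u v => ?_⟩
  rw [pathSquare, SimpleGraph.fromRel_adj, abs_le]
  refine and_congr_right fun huv => ⟨?_, fun ⟨h₁, h₂⟩ => ?_⟩
  · rintro ((h | h) | (h | h)) <;>
      · simp only [← h, Nat.cast_add, Nat.cast_ofNat, Nat.cast_one]
        constructor <;> linarith
  · have hle : u.val ≤ v.val + 2 := by exact_mod_cast (by linarith : (u.val : ℝ) ≤ v.val + 2)
    have hge : v.val ≤ u.val + 2 := by exact_mod_cast (by linarith : (v.val : ℝ) ≤ u.val + 2)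
    have := Fin.val_ne_of_ne huv
    omega

lemma pathSquare_le_comap_sort {n : ℕ} (hn : 3 ≤ n) {G H : SimpleGraph (Fin n)} (hHG : H ≤ G)
    (hH : ∀ t, (H.induce {t}ᶜ).Preconnected) {x : Fin n → ℝ}
    (hx : ∀ u v, G.Adj u v ↔ u ≠ v ∧ |x u - x v| ≤ 1) :
    pathSquare n ≤ G.comap (Tuple.sort x) := by
  set σ := Tuple.sort x
  have hmono : Monotone (x ∘ σ) := Tuple.monotone_sort x
  have hskip : ∀ i j : Fin n, j.val = i.val + 2 → x (σ j) - x (σ i) ≤ 1 := by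
    intro i j hij
    let t : Fin n := ⟨i.val + 1, by omega⟩
    have ht : t.val = i.val + 1 := rfl
    have hσ : ∀ k, k ≠ t → σ k ∈ ({σ t}ᶜ : Set (Fin n)) := fun k hk => σ.injective.ne hk
    refine (hH (σ t)).sub_le_one (x := x ∘ Subtype.val)
      (u := ⟨σ i, hσ i (Fin.ne_of_val_ne (by omega))⟩)
      (w := ⟨σ j, hσ j (Fin.ne_of_val_ne (by omega))⟩)
      (fun a b hab => ((hx _ _).1 (hHG hab)).2) fun ⟨v, hv⟩ => ?_
    obtain ⟨k, rfl⟩ := σ.surjective v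
    have hk : k.val ≠ i.val + 1 := fun h => hv (congrArg σ (Fin.ext h))
    rcases le_or_gt k.val i.val with hki | hik
    · exact .inl (hmono (Fin.mk_le_mk.2 hki))
    · exact .inr (hmono (Fin.mk_le_mk.2 (by omega)))
  have hnear : ∀ i j : Fin n, i ≤ j → j.val ≤ i.val + 2 → |x (σ i) - x (σ j)| ≤ 1 := by
    intro i j hij hji
    -- slide `[i, j]` into a window `[k, k + 2]` of positions that fits in `Fin n`
    let k : Fin n := ⟨min i.val (n - 3), by omega⟩
    have hk : k.val = min i.val (n - 3) := rfl
    let k₂ : Fin n := ⟨k.val + 2, by omega⟩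
    have hki : x (σ k) ≤ x (σ i) := hmono (Fin.mk_le_mk.2 (by omega))
    have hjk : x (σ j) ≤ x (σ k₂) := hmono (Fin.mk_le_mk.2 (by omega))
    have hij' : x (σ i) ≤ x (σ j) := hmono hij
    have := hskip k k₂ rfl
    rw [abs_sub_comm, abs_of_nonneg (by linarith)]
    linarith
  intro i j hadj
  rw [pathSquare, SimpleGraph.fromRel_adj] at hadj
  refine (hx _ _).2 ⟨σ.injective.ne hadj.1, ?_⟩
  rcases hadj.2 with h | h
  · exact hnear i j (Fin.le_def.2 (by omega)) (by omega)
  · exact abs_sub_comm (x (σ i)) _ ▸ hnear j i (Fin.le_def.2 (by omega)) (by omega)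

lemma cycleGraph_adj {n : ℕ} {u v : Fin n} :
    (cycleGraph n).Adj u v ↔ u ≠ v ∧ ((u.val + 1) % n = v.val ∨ (v.val + 1) % n = u.val) :=
  SimpleGraph.fromRel_adj ..

lemma card_edgeSet_cycleGraph {n : ℕ} (hn : 3 ≤ n) : Nat.card (cycleGraph n).edgeSet = n := by
  rw [cycleGraph, SimpleGraph.card_edgeSet_fromRel]
  · refine (Nat.card_congr ?_).trans (Nat.card_fin n)
    exact
      { toFun := fun p => p.1.1
        invFun := fun i => ⟨(i, ⟨(i.val + 1) % n, Nat.mod_lt _ (by omega)⟩), rfl⟩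
        left_inv := fun ⟨⟨a, b⟩, h⟩ => by ext <;> [rfl; exact h]
        right_inv := fun i => rfl }
  · intro a b hab hba
    have ha := a.isLt
    have hb := b.isLt
    rw [Nat.mod_eq_ite_of_lt_two_mul (by omega)] at hab hba
    split_ifs at hab hba <;> omega

lemma cycleGraph_induce_compl_preconnected {n : ℕ} (t : Fin n) :
    ((cycleGraph n).induce {t}ᶜ).Preconnected := by
  have ht := t.isLt
  -- `m ↦ t + m + 1` runs along the cycle from the successor of `t` to its predecessor.
  let f : SimpleGraph.pathGraph (n - 1) →g (cycleGraph n).induce {t}ᶜ :=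
    { toFun := fun m => ⟨⟨(t.val + (m.val + 1)) % n, Nat.mod_lt _ (by omega)⟩, fun h => by
        have hm := m.isLt
        have h' : (t.val + (m.val + 1)) % n = t.val :=
          congrArg Fin.val (Set.mem_singleton_iff.1 h)
        rw [Nat.mod_eq_ite_of_lt_two_mul (by omega)] at h'
        split_ifs at h' <;> omega⟩
      map_rel' := fun {a b} hab => by
        have := a.isLt
        have := b.isLt
        rw [SimpleGraph.pathGraph_adj] at hab
        simp only [SimpleGraph.induce_adj, cycleGraph_adj, ne_eq, Fin.ext_iff, Nat.mod_add_mod]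
        simp (disch := omega) only [Nat.mod_eq_ite_of_lt_two_mul]
        split_ifs <;> omega }
  refine (SimpleGraph.pathGraph_preconnected _).map f fun ⟨w, hw⟩ => ?_
  have hwt : w.val ≠ t.val := fun h => hw (Fin.ext h)
  have := w.isLt
  refine ⟨⟨if t.val < w.val then w.val - t.val - 1 else w.val + n - t.val - 1,
    by split_ifs <;> omega⟩, Subtype.ext (Fin.ext ?_)⟩
  show (t.val + (_ + 1)) % n = w.val
  simp (disch := split_ifs <;> omega) only [Nat.mod_eq_ite_of_lt_two_mul]
  split_ifs <;> omega

/-- The position of vertex `i` in the listing `0, 1, n - 1, 2, n - 2, …` of the cycle. -/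
def zigzag (n : ℕ) (i : Fin n) : ℕ :=
  if i.val = 0 then 0 else if 2 * i.val ≤ n then 2 * i.val - 1 else 2 * (n - i.val)

lemma zigzag_lt {n : ℕ} (i : Fin n) : zigzag n i < n := by
  have := i.isLt
  unfold zigzag
  split_ifs <;> omega

lemma zigzag_injective (n : ℕ) : Function.Injective (zigzag n) := by
  intro i j h
  have := i.isLt
  have := j.isLt
  unfold zigzag at h
  split_ifs at h <;> (apply Fin.ext; omega)

noncomputable def zigzagEquiv (n : ℕ) : Fin n ≃ Fin n :=
  .ofBijective (fun i => ⟨zigzag n i, zigzag_lt i⟩)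
    (Finite.injective_iff_bijective.mp fun _ _ h => zigzag_injective n (Fin.val_eq_of_eq h))

lemma cycleGraph_le_comap_zigzagEquiv (n : ℕ) :
    cycleGraph n ≤ (pathSquare n).comap (zigzagEquiv n) := by
  intro u v huv
  rw [cycleGraph_adj] at huv
  rw [SimpleGraph.comap_adj, pathSquare, SimpleGraph.fromRel_adj]
  refine ⟨(zigzagEquiv n).injective.ne huv.1, ?_⟩
  have := u.isLt
  have := v.isLt
  have := Fin.val_ne_of_ne huv.1
  simp (disch := omega) only [Nat.mod_eq_ite_of_lt_two_mul] at huv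
  simp only [zigzagEquiv, Equiv.ofBijective_apply, zigzag]
  split_ifs at huv ⊢ <;> omega

/-- `adi(C_n) = n − 3` for `n ≥ 3`. -/
theorem adi_cycle (n : ℕ) (hn : 3 ≤ n) : adi (cycleGraph n) = n - 3 := by
  have hC := card_edgeSet_cycleGraph hn
  have hP := card_edgeSet_pathSquare n
  have hmem : n - 3 ∈ {k | ∃ G : SimpleGraph (Fin n), cycleGraph n ≤ G ∧ IsUnitInterval G ∧
      Nat.card G.edgeSet = Nat.card (cycleGraph n).edgeSet + k} :=
    ⟨_, cycleGraph_le_comap_zigzagEquiv n,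
      (isUnitInterval_pathSquare n).comap (zigzagEquiv n).injective,
      by rw [Nat.card_congr (SimpleGraph.Iso.comap _ _).mapEdgeSet, hP, hC]; omega⟩
  unfold adi
  refine le_antisymm (Nat.sInf_le hmem) ?_
  obtain ⟨G, hCG, ⟨x, hx⟩, hG⟩ := Nat.sInf_mem ⟨_, hmem⟩
  have := SimpleGraph.card_edgeSet_le_of_le_comap (Tuple.sort x)
    (pathSquare_le_comap_sort hn hCG cycleGraph_induce_compl_preconnected hx)
  omega
end

section
/- Let h be a Hessenberg function on Fin n and let b_j be the coefficients of B(t) = ∑_{σ ∈ S_n} t^{inv_h(σ)}, where inv_h(σ) = #{(i,j) : i < j ≤ h(i), σ(i) > σ(j)}. Then the coefficients are palindromic: b_j = b_{d − j} for all j, where d = #{(i,j) : i < j ≤ h(i)} is the number of edges of Γ(h). -/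
/-- `inv_h(σ)`: the number of `h`-inversions of a permutation `σ`. -/
def invh {n : ℕ} (h : Fin n → Fin n) (σ : Equiv.Perm (Fin n)) : ℕ :=
  (Finset.univ.filter
    (fun p : Fin n × Fin n => p.1 < p.2 ∧ p.2 ≤ h p.1 ∧ σ p.2 < σ p.1)).card

lemma invh_le {n : ℕ} (h : Fin n → Fin n) (σ : Equiv.Perm (Fin n)) :
    invh h σ ≤ (Finset.univ.filter
      (fun p : Fin n × Fin n => p.1 < p.2 ∧ p.2 ≤ h p.1)).card := by
  apply Finset.card_le_card
  intro p hp
  simp only [Finset.mem_filter] at *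
  tauto

lemma invh_rev {n : ℕ} (h : Fin n → Fin n) (σ : Equiv.Perm (Fin n)) :
    invh h (σ.trans Fin.revPerm) = (Finset.univ.filter
      (fun p : Fin n × Fin n => p.1 < p.2 ∧ p.2 ≤ h p.1)).card - invh h σ := by
  have h1 : invh h (σ.trans Fin.revPerm) =
      (Finset.filter (fun p : Fin n × Fin n => ¬ σ p.2 < σ p.1)
        (Finset.univ.filter (fun p : Fin n × Fin n => p.1 < p.2 ∧ p.2 ≤ h p.1))).card := by
    rw [invh, Finset.filter_filter]
    congr 1
    apply Finset.filter_congr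
    intro p _
    simp only [Equiv.trans_apply, Fin.revPerm_apply, Fin.rev_lt_rev]
    constructor
    · rintro ⟨h1, h2, h3⟩
      exact ⟨⟨h1, h2⟩, not_lt.mpr h3.le⟩
    · rintro ⟨⟨h1, h2⟩, h3⟩
      refine ⟨h1, h2, ?_⟩
      rcases lt_trichotomy (σ p.1) (σ p.2) with hlt | heq | hgt
      · exact hlt
      · exact absurd (σ.injective heq) h1.ne
      · exact absurd hgt h3
  have h2 : invh h σ =
      (Finset.filter (fun p : Fin n × Fin n => σ p.2 < σ p.1)
        (Finset.univ.filter (fun p : Fin n × Fin n => p.1 < p.2 ∧ p.2 ≤ h p.1))).card := by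
    rw [invh, Finset.filter_filter]
    congr 1
    apply Finset.filter_congr
    intro p _
    tauto
  have h3 := Finset.card_filter_add_card_filter_not
    (s := Finset.univ.filter (fun p : Fin n × Fin n => p.1 < p.2 ∧ p.2 ≤ h p.1))
    (p := fun p : Fin n × Fin n => σ p.2 < σ p.1)
  omega

/-- the coefficients `b_j = #{σ : inv_h(σ) = j}` are
palindromic: `b_j = b_{d−j}` where `d = #{(i,j) : i < j ≤ h(i)}`. -/
theorem invh_palindromic {n : ℕ} (h : Fin n → Fin n)
    (hge : ∀ i, i ≤ h i) (hmono : Monotone h) (d : ℕ)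
    (hd : d = (Finset.univ.filter
      (fun p : Fin n × Fin n => p.1 < p.2 ∧ p.2 ≤ h p.1)).card) :
    ∀ j ≤ d,
      (Finset.univ.filter (fun σ : Equiv.Perm (Fin n) => invh h σ = j)).card =
      (Finset.univ.filter (fun σ : Equiv.Perm (Fin n) => invh h σ = d - j)).card := by
  intro j hj
  have hrevrev : ∀ σ : Equiv.Perm (Fin n), (σ.trans Fin.revPerm).trans Fin.revPerm = σ := by
    intro σ
    ext x
    simp
  apply Finset.card_bij' (fun σ _ => σ.trans Fin.revPerm) (fun σ _ => σ.trans Fin.revPerm)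
  · intro σ _; exact hrevrev σ
  · intro σ _; exact hrevrev σ
  · intro σ hσ
    simp only [Finset.mem_filter, Finset.mem_univ, true_and] at *
    rw [invh_rev, ← hd, hσ]
  · intro σ hσ
    simp only [Finset.mem_filter, Finset.mem_univ, true_and] at *
    have hle := invh_le h σ
    rw [← hd] at hle
    rw [invh_rev, ← hd, hσ]
    omega
end
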